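/- arXiv:2108.06780 — 3 statements merged into one kernel-verified Lean document; each statement's English description precedes it below -/
import Mathlib

section
/- Let x ∈ (0,1) be irrational with θ_n = q_n x − p_n. Then for every n ≥ 1, the series ∑_{k=n}^∞ a_k |θ_{k−1}| converges and equals |θ_{n−2}| + |θ_{n−1}|. -/
open scoped BigOperators

/-- The Gauss map `x ↦ {1/x}` (with `T 0 = 0`). -/
noncomputable def gauss (x : ℝ) : ℝ := Int.fract (1 / x)

/-- `cf x n = (p_{n-1}, q_{n-1})`, the continued fraction convergents of `x`,
with `p_{-1} = 1, q_{-1} = 0, p_0 = 0, q_0 = 1`,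
`p_{k+1} = a_{k+1} p_k + p_{k-1}`, `q_{k+1} = a_{k+1} q_k + q_{k-1}`,
where `a_{k+1} = ⌊1 / T^k x⌋`. -/
noncomputable def cf (x : ℝ) : ℕ → ℤ × ℤ
  | 0 => (1, 0)
  | 1 => (0, 1)
  | n + 2 => (⌊1 / gauss^[n] x⌋ * (cf x (n + 1)).1 + (cf x n).1,
              ⌊1 / gauss^[n] x⌋ * (cf x (n + 1)).2 + (cf x n).2)

/-- `pcf x n = p_{n-1}`. -/
noncomputable def pcf (x : ℝ) (n : ℕ) : ℤ := (cf x n).1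

/-- `qcf x n = q_{n-1}`. -/
noncomputable def qcf (x : ℝ) (n : ℕ) : ℤ := (cf x n).2

/-- `acf x i = a_i = ⌊1 / T^{i-1} x⌋`, the `i`-th partial quotient (for `i ≥ 1`). -/
noncomputable def acf (x : ℝ) (i : ℕ) : ℤ := ⌊1 / gauss^[i - 1] x⌋

/-- `absθ x n = |θ_{n-1}| = |q_{n-1} x - p_{n-1}|` (so `absθ x 0 = 1`, `absθ x 1 = |x|`). -/
noncomputable def absθ (x : ℝ) (n : ℕ) : ℝ := |(qcf x n : ℝ) * x - (pcf x n : ℝ)|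

/-!
Write `P n = x · T x ⋯ T^{n-1} x` (`gaussProd x n`) for the products of the Gauss
iterates. Since `y · T y = 1 - ⌊1/y⌋ y`, they satisfy `P (n+2) = P n - a_{n+1} P (n+1)`,
the recursion of the `θ`'s up to sign, so `|θ_{n-1}| = P n`, and
`a_k |θ_{k-1}| = |θ_{k-2}| - |θ_k|` makes the series telescope. The products tend to `0`
because `a_k ≥ 1` for `k ≥ 2` gives `P (k+1) + P (k+2) ≤ P k` from `k = 1` on.
-/

open Filter Topology

lemma tendsto_zero_of_add_succ_le {Q : ℕ → ℝ} (h0 : ∀ n, 0 ≤ Q n)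
    (h : ∀ n, Q (n + 1) + Q (n + 2) ≤ Q n) : Tendsto Q atTop (𝓝 0) := by
  have hanti : Antitone Q := antitone_nat_of_succ_le fun n => by linarith [h n, h0 (n + 2)]
  have hlim := tendsto_atTop_ciInf hanti ⟨0, by rintro _ ⟨n, rfl⟩; exact h0 n⟩
  set L := ⨅ n, Q n
  have hsum := ((tendsto_add_atTop_iff_nat 1).2 hlim).add ((tendsto_add_atTop_iff_nat 2).2 hlim)
  have hle : L + L ≤ L := le_of_tendsto_of_tendsto' hsum hlim h
  have hge : 0 ≤ L := ge_of_tendsto' hlim h0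
  rwa [show L = 0 by linarith] at hlim

lemma hasSum_sub_succ_of_tendsto_zero {f : ℕ → ℝ} (hf : ∀ n, f (n + 1) ≤ f n)
    (hlim : Tendsto f atTop (𝓝 0)) : HasSum (fun n => f n - f (n + 1)) (f 0) := by
  rw [hasSum_iff_tendsto_nat_of_nonneg fun n => sub_nonneg.2 (hf n)]
  simp_rw [Finset.sum_range_sub']
  simpa using tendsto_const_nhds.sub hlim

lemma irrational_gauss {y : ℝ} (hy : Irrational y) : Irrational (gauss y) := by
  rw [gauss, Int.fract, one_div]
  exact hy.inv.sub_intCast _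

lemma gauss_pos {y : ℝ} (hy : Irrational y) : 0 < gauss y :=
  Int.fract_pos.2 ((one_div y ▸ hy.inv).ne_int _)

lemma gauss_lt_one (y : ℝ) : gauss y < 1 := Int.fract_lt_one _

lemma mul_gauss {y : ℝ} (hy : y ≠ 0) : y * gauss y = 1 - ⌊1 / y⌋ * y := by
  rw [gauss, Int.fract]
  field_simp

lemma irrational_gauss_iterate {x : ℝ} (hx : Irrational x) (n : ℕ) :
    Irrational (gauss^[n] x) := by
  induction n with
  | zero => exact hx
  | succ n ih => rw [Function.iterate_succ_apply']; exact irrational_gauss ih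

lemma gauss_iterate_succ_pos {x : ℝ} (hx : Irrational x) (n : ℕ) : 0 < gauss^[n + 1] x := by
  rw [Function.iterate_succ_apply']
  exact gauss_pos (irrational_gauss_iterate hx n)

lemma gauss_iterate_pos {x : ℝ} (hx : Irrational x) (hx0 : 0 < x) (n : ℕ) :
    0 < gauss^[n] x := by
  cases n with
  | zero => exact hx0
  | succ n => exact gauss_iterate_succ_pos hx n

lemma one_le_acf_add_two {x : ℝ} {n : ℕ} (hn : 0 < gauss^[n + 1] x) : 1 ≤ acf x (n + 2) := by
  have hlt : gauss^[n + 1] x < 1 := by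
    rw [Function.iterate_succ_apply']
    exact gauss_lt_one _
  change 1 ≤ ⌊1 / gauss^[n + 1] x⌋
  rw [Int.le_floor, Int.cast_one]
  exact one_le_one_div hn hlt.le

lemma acf_nonneg {x : ℝ} {n : ℕ} (hn : 0 < gauss^[n] x) : 0 ≤ acf x (n + 1) := by
  change 0 ≤ ⌊1 / gauss^[n] x⌋
  positivity

noncomputable def gaussProd (x : ℝ) (n : ℕ) : ℝ := ∏ i ∈ Finset.range n, gauss^[i] x

lemma gaussProd_pos {x : ℝ} (hx : Irrational x) (hx0 : 0 < x) (n : ℕ) : 0 < gaussProd x n :=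
  Finset.prod_pos fun i _ => gauss_iterate_pos hx hx0 i

lemma gaussProd_add_two {x : ℝ} {n : ℕ} (hn : gauss^[n] x ≠ 0) :
    gaussProd x (n + 2) = gaussProd x n - acf x (n + 1) * gaussProd x (n + 1) := by
  have hiter : gauss^[n + 1] x = gauss (gauss^[n] x) := Function.iterate_succ_apply' _ _ _
  simp only [gaussProd, Finset.prod_range_succ, acf, Nat.add_sub_cancel, hiter]
  linear_combination (∏ i ∈ Finset.range n, gauss^[i] x) * mul_gauss hn

lemma acf_mul_gaussProd {x : ℝ} {n : ℕ} (hn : gauss^[n] x ≠ 0) :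
    acf x (n + 1) * gaussProd x (n + 1) = gaussProd x n - gaussProd x (n + 2) := by
  rw [gaussProd_add_two hn]
  ring

lemma qcf_mul_sub_pcf {x : ℝ} (hx : ∀ k, gauss^[k] x ≠ 0) (n : ℕ) :
    (qcf x n : ℝ) * x - pcf x n = (-1) ^ (n + 1) * gaussProd x n := by
  induction n using Nat.twoStepInduction with
  | zero => simp [qcf, pcf, cf, gaussProd]
  | one => simp [qcf, pcf, cf, gaussProd]
  | more n ih₀ ih₁ =>
    have hq : qcf x (n + 2) = acf x (n + 1) * qcf x (n + 1) + qcf x n := by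
      simp [qcf, cf, acf]
    have hp : pcf x (n + 2) = acf x (n + 1) * pcf x (n + 1) + pcf x n := by
      simp [pcf, cf, acf]
    rw [hq, hp, gaussProd_add_two (hx n)]
    push_cast
    linear_combination (acf x (n + 1) : ℝ) * ih₁ + ih₀

lemma absθ_eq_gaussProd {x : ℝ} (hx : Irrational x) (hx0 : 0 < x) (n : ℕ) :
    absθ x n = gaussProd x n := by
  rw [absθ, qcf_mul_sub_pcf (fun k => (gauss_iterate_pos hx hx0 k).ne'), abs_mul, abs_pow,
    abs_neg, abs_one, one_pow, one_mul, abs_of_pos (gaussProd_pos hx hx0 n)]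

lemma tendsto_gaussProd {x : ℝ} (hx : Irrational x) (hx0 : 0 < x) :
    Tendsto (gaussProd x) atTop (𝓝 0) := by
  refine (tendsto_add_atTop_iff_nat 1).1 (tendsto_zero_of_add_succ_le
    (fun n => (gaussProd_pos hx hx0 _).le) fun n => ?_)
  have hdiff := acf_mul_gaussProd (gauss_iterate_pos hx hx0 (n + 1)).ne'
  have ha : (1 : ℝ) ≤ acf x (n + 2) := by
    exact_mod_cast one_le_acf_add_two (gauss_iterate_succ_pos hx n)
  nlinarith [gaussProd_pos hx hx0 (n + 2)]

theorem theta_tail_sum_general (x : ℝ) (hirr : Irrational x)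
    (hx0 : 0 < x) (n : ℕ) (hn : 1 ≤ n) :
    HasSum (fun j : ℕ => (acf x (n + j) : ℝ) * absθ x (n + j))
      (absθ x (n - 1) + absθ x n) := by
  obtain ⟨m, rfl⟩ : ∃ m, n = m + 1 := ⟨n - 1, by omega⟩
  set f : ℕ → ℝ := fun j => gaussProd x (j + m) + gaussProd x (j + m + 1)
  have hterm (j : ℕ) : (acf x (m + 1 + j) : ℝ) * absθ x (m + 1 + j) = f j - f (j + 1) := by
    rw [absθ_eq_gaussProd hirr hx0, show m + 1 + j = j + m + 1 by omega,
      acf_mul_gaussProd (gauss_iterate_pos hirr hx0 _).ne']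
    simp only [f, show j + 1 + m = j + m + 1 by omega]
    ring
  have hf_anti (j : ℕ) : f (j + 1) ≤ f j := by
    rw [← sub_nonneg, ← hterm, show m + 1 + j = j + m + 1 by omega]
    exact mul_nonneg (by exact_mod_cast acf_nonneg (gauss_iterate_pos hirr hx0 (j + m)))
      (abs_nonneg _)
  have hf_lim : Tendsto f atTop (𝓝 0) := by
    have hP := tendsto_gaussProd hirr hx0
    have hsum := ((tendsto_add_atTop_iff_nat m).2 hP).add ((tendsto_add_atTop_iff_nat (m + 1)).2 hP)
    rwa [add_zero] at hsum
  simp_rw [hterm, Nat.add_sub_cancel, absθ_eq_gaussProd hirr hx0]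
  simpa [f] using hasSum_sub_succ_of_tendsto_zero hf_anti hf_lim

/-- for irrational `x ∈ (0,1)` and every `n ≥ 1`,
`∑_{k=n}^∞ a_k |θ_{k-1}|` converges and equals `|θ_{n-2}| + |θ_{n-1}|`. -/
theorem theta_tail_sum (x : ℝ) (hirr : Irrational x)
    (hx0 : 0 < x) (hx1 : x < 1) (n : ℕ) (hn : 1 ≤ n) :
    HasSum (fun j : ℕ => (acf x (n + j) : ℝ) * absθ x (n + j))
      (absθ x (n - 1) + absθ x n) :=
  theta_tail_sum_general x hirr hx0 n hn
end

section
/- Let x ∈ (0,1) be irrational with θ_n = q_n x − p_n, θ_{−1}=1, θ_0=x. Then x = ∑_{k=1}^∞ a_{2k} |θ_{2k−1}| and 1 = ∑_{k=0}^∞ a_{2k+1} |θ_{2k}|. -/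
open scoped BigOperators

/-! The Gauss map gives `|θ_n| = T^n x · |θ_{n-1}|` and `T^{n+1} x = 1 / T^n x - a_{n+1}`, whence
`a_{n+1} |θ_n| = |θ_{n-1}| - |θ_{n+1}|`. Summing over every other `n` telescopes to `|θ_{-1}| = 1`
or `|θ_0| = x`, because `|θ_n|` decreases and at least halves every two steps, so tends to `0`. -/

open Filter Topology Set

theorem Antitone.hasSum_sub_succ {f : ℕ → ℝ} {l : ℝ} (hf : Antitone f)
    (h : Tendsto f atTop (𝓝 l)) : HasSum (fun n ↦ f n - f (n + 1)) (f 0 - l) := by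
  rw [hasSum_iff_tendsto_nat_of_nonneg fun n ↦ sub_nonneg.2 (hf n.le_succ)]
  simpa only [Finset.sum_range_sub'] using h.const_sub (f 0)

theorem mapsTo_gauss :
    MapsTo gauss {y | Irrational y ∧ y ∈ Ioo 0 1} {y | Irrational y ∧ y ∈ Ioo 0 1} := by
  rintro y ⟨hirr, -⟩
  have hfract : Irrational (gauss y) := by
    rw [gauss, one_div, Int.fract]
    exact hirr.inv.sub_intCast _
  exact ⟨hfract, (Int.fract_nonneg _).lt_of_ne hfract.ne_zero.symm, Int.fract_lt_one _⟩

theorem gauss_iterate_succ_apply (x : ℝ) (n : ℕ) :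
    gauss^[n + 1] x = 1 / gauss^[n] x - acf x (n + 1) := by
  rw [Function.iterate_succ_apply']
  rfl

/-- `theta x n = θ_{n-1}`, indexed like `absθ`. -/
noncomputable def theta (x : ℝ) (n : ℕ) : ℝ := (qcf x n : ℝ) * x - (pcf x n : ℝ)

theorem theta_add_two (x : ℝ) (n : ℕ) :
    theta x (n + 2) = acf x (n + 1) * theta x (n + 1) + theta x n := by
  simp only [theta, qcf, pcf, cf, acf, Nat.add_sub_cancel]
  push_cast
  ring

theorem absθ_zero (x : ℝ) : absθ x 0 = 1 := by
  simp [absθ, qcf, pcf, cf]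

section

variable {x : ℝ}

theorem theta_succ (hx : ∀ n, gauss^[n] x ≠ 0) (n : ℕ) :
    theta x (n + 1) = -gauss^[n] x * theta x n := by
  induction n with
  | zero => simp [theta, qcf, pcf, cf]
  | succ n ih =>
    rw [theta_add_two, ih, gauss_iterate_succ_apply]
    field_simp [hx n]
    ring

theorem absθ_succ (hx : ∀ n, gauss^[n] x ∈ Ioo 0 1) (n : ℕ) :
    absθ x (n + 1) = gauss^[n] x * absθ x n := by
  have := theta_succ (fun k ↦ (hx k).1.ne') n
  rw [absθ, absθ, ← theta, ← theta, this, abs_mul, abs_neg, abs_of_pos (hx n).1]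

theorem absθ_pos (hx : ∀ n, gauss^[n] x ∈ Ioo 0 1) (n : ℕ) : 0 < absθ x n := by
  induction n with
  | zero => simp [absθ_zero]
  | succ n ih => rw [absθ_succ hx]; exact mul_pos (hx n).1 ih

theorem strictAnti_absθ (hx : ∀ n, gauss^[n] x ∈ Ioo 0 1) : StrictAnti (absθ x) :=
  strictAnti_nat_of_succ_lt fun n ↦ by
    rw [absθ_succ hx]
    exact mul_lt_of_lt_one_left (absθ_pos hx n) (hx n).2

theorem one_le_acf (hx : ∀ n, gauss^[n] x ∈ Ioo 0 1) (n : ℕ) : 1 ≤ acf x (n + 1) := by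
  rw [acf, Nat.add_sub_cancel, Int.le_floor, Int.cast_one, le_one_div one_pos (hx n).1, div_one]
  exact (hx n).2.le

theorem acf_mul_absθ_succ (hx : ∀ n, gauss^[n] x ∈ Ioo 0 1) (n : ℕ) :
    acf x (n + 1) * absθ x (n + 1) = absθ x n - absθ x (n + 2) := by
  rw [absθ_succ hx (n + 1), absθ_succ hx n, gauss_iterate_succ_apply]
  field_simp [(hx n).1.ne']
  ring

theorem absθ_add_two_le_half (hx : ∀ n, gauss^[n] x ∈ Ioo 0 1) (n : ℕ) :
    absθ x (n + 2) ≤ absθ x n / 2 := by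
  have hlt : absθ x (n + 2) < absθ x (n + 1) := strictAnti_absθ hx (by omega)
  have ha : (1 : ℝ) ≤ acf x (n + 1) := by exact_mod_cast one_le_acf hx n
  nlinarith [acf_mul_absθ_succ hx n, absθ_pos hx (n + 1)]

theorem tendsto_absθ (hx : ∀ n, gauss^[n] x ∈ Ioo 0 1) : Tendsto (absθ x) atTop (𝓝 0) := by
  have hL := tendsto_atTop_ciInf (strictAnti_absθ hx).antitone
    ⟨0, by rintro _ ⟨n, rfl⟩; exact (absθ_pos hx n).le⟩
  set L := ⨅ n, absθ x n
  have hhalf : L ≤ L / 2 := le_of_tendsto_of_tendsto (hL.comp (tendsto_add_atTop_nat 2))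
    (hL.div_const 2) (Eventually.of_forall (absθ_add_two_le_half hx))
  have hnonneg : 0 ≤ L := ge_of_tendsto' hL fun n ↦ (absθ_pos hx n).le
  rwa [show L = 0 by linarith] at hL

theorem hasSum_acf_mul_absθ (hx : ∀ n, gauss^[n] x ∈ Ioo 0 1) (m : ℕ) :
    HasSum (fun k ↦ (acf x (m + 2 * k + 1) : ℝ) * absθ x (m + 2 * k + 1)) (absθ x m) := by
  have hmono : StrictMono fun k ↦ m + 2 * k := fun _ _ h ↦ by dsimp only; omega
  have := ((strictAnti_absθ hx).antitone.comp_monotone hmono.monotone).hasSum_sub_succ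
    ((tendsto_absθ hx).comp hmono.tendsto_atTop)
  simpa [acf_mul_absθ_succ hx, mul_add, ← add_assoc] using this

end

/-- for irrational `x ∈ (0,1)`,
`x = ∑_{k=1}^∞ a_{2k} |θ_{2k-1}|` and `1 = ∑_{k=0}^∞ a_{2k+1} |θ_{2k}|`. -/
theorem theta_parity_sums (x : ℝ) (hirr : Irrational x)
    (hx0 : 0 < x) (hx1 : x < 1) :
    HasSum (fun k : ℕ => (acf x (2 * (k + 1)) : ℝ) * absθ x (2 * (k + 1))) x ∧
    HasSum (fun k : ℕ => (acf x (2 * k + 1) : ℝ) * absθ x (2 * k + 1)) 1 := by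
  have hx n : gauss^[n] x ∈ Ioo 0 1 := (mapsTo_gauss.iterate n ⟨hirr, hx0, hx1⟩).2
  have habsθ_one : absθ x 1 = x := by
    rw [absθ_succ hx, absθ_zero, mul_one, Function.iterate_zero_apply]
  constructor
  · simpa [show ∀ k, 1 + 2 * k + 1 = 2 * (k + 1) by omega, habsθ_one]
      using hasSum_acf_mul_absθ hx 1
  · simpa [absθ_zero] using hasSum_acf_mul_absθ hx 0
end

section
/- For irrational x ∈ (0,1) and y ∈ [0,1), a_i ≠ b_i for infinitely many odd indices i and for infinitely many even indices i, where (a_i,b_i) are the digits of the Ostrowski expansion of (x,y). -/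
open scoped BigOperators

/-- The Ostrowski map `S(x,y) = ({1/x}, {y/x})`, with `S(0,y) = (0,0)`. -/
noncomputable def ost (p : ℝ × ℝ) : ℝ × ℝ :=
  if p.1 = 0 then (0, 0) else (Int.fract (1 / p.1), Int.fract (p.2 / p.1))

/-- `adig x y n = a_{n+1} = ⌊1 / x_n⌋` where `(x_n, y_n) = S^n (x,y)`. -/
noncomputable def adig (x y : ℝ) (n : ℕ) : ℤ := ⌊1 / (ost^[n] (x, y)).1⌋

/-- `bdig x y n = b_{n+1} = ⌊y_n / x_n⌋` where `(x_n, y_n) = S^n (x,y)`. -/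
noncomputable def bdig (x y : ℝ) (n : ℕ) : ℤ := ⌊(ost^[n] (x, y)).2 / (ost^[n] (x, y)).1⌋

/-!
If `a = b` at a point `(x, y)`, then `y' < x'` after one step, so `y'' = y' / x'` and
`1 - y'' = (1 - y) / (x x')` with `x x' = x {1/x} ≤ 1/2`. Agreement at `i, i + 2, i + 4, …`
would therefore double `1 - y ∈ (0, 1]` every two steps, which is impossible. Every point
with irrational first coordinate is sent by `S` into the domain where this argument runs.
-/

structure OstDomain (p : ℝ × ℝ) : Prop where
  irrational : Irrational p.1
  pos : 0 < p.1
  lt_one : p.1 < 1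
  snd_nonneg : 0 ≤ p.2
  snd_lt_one : p.2 < 1

lemma ost_of_ne_zero {p : ℝ × ℝ} (h : p.1 ≠ 0) :
    ost p = (Int.fract (1 / p.1), Int.fract (p.2 / p.1)) :=
  if_neg h

lemma Irrational.fract {t : ℝ} (h : Irrational t) : Irrational (Int.fract t) :=
  h.sub_intCast _

lemma ostDomain_ost {p : ℝ × ℝ} (h : Irrational p.1) : OstDomain (ost p) := by
  have hfract : Irrational (Int.fract (1 / p.1)) := (one_div p.1 ▸ h.inv).fract
  rw [ost_of_ne_zero h.ne_zero]
  exact ⟨hfract, (Int.fract_nonneg _).lt_of_ne' hfract.ne_zero, Int.fract_lt_one _,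
    Int.fract_nonneg _, Int.fract_lt_one _⟩

lemma ostDomain_iterate_succ {p : ℝ × ℝ} (h : Irrational p.1) :
    ∀ n : ℕ, OstDomain (ost^[n + 1] p)
  | 0 => ostDomain_ost h
  | n + 1 => by
    rw [Function.iterate_succ_apply']
    exact ostDomain_ost (ostDomain_iterate_succ h n).irrational

lemma OstDomain.iterate {p : ℝ × ℝ} (h : OstDomain p) : ∀ n : ℕ, OstDomain (ost^[n] p)
  | 0 => h
  | n + 1 => ostDomain_iterate_succ h.irrational n

lemma mul_fract_one_div_le_half {x : ℝ} (h0 : 0 < x) (h1 : x ≤ 1) :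
    x * Int.fract (1 / x) ≤ 1 / 2 := by
  have hfloor : (1 : ℝ) ≤ ⌊1 / x⌋ :=
    mod_cast Int.le_floor.mpr (by simpa using one_le_one_div h0 h1)
  have heq : x * Int.fract (1 / x) = 1 - x * ⌊1 / x⌋ := by
    rw [Int.fract, mul_sub, mul_one_div_cancel h0.ne']
  have hlt : x * Int.fract (1 / x) < x := mul_lt_of_lt_one_right h0 (Int.fract_lt_one _)
  nlinarith

lemma one_sub_snd_ost_ost {p : ℝ × ℝ} (h : OstDomain p) (heq : ⌊1 / p.1⌋ = ⌊p.2 / p.1⌋) :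
    1 - (ost (ost p)).2 = (1 - p.2) / (p.1 * (ost p).1) := by
  obtain ⟨-, hx'0, -, hy'0, -⟩ := ostDomain_ost h.irrational
  have hx' : (ost p).1 = 1 / p.1 - ⌊1 / p.1⌋ := by rw [ost_of_ne_zero h.pos.ne']; rfl
  have hy' : (ost p).2 = p.2 / p.1 - ⌊1 / p.1⌋ := by
    rw [ost_of_ne_zero h.pos.ne', heq]; rfl
  have hdiff : (ost p).1 - (ost p).2 = (1 - p.2) / p.1 := by
    rw [hx', hy']; ring
  have hy'x' : (ost p).2 < (ost p).1 := by
    have : 0 < (1 - p.2) / p.1 := div_pos (by linarith [h.snd_lt_one]) h.pos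
    linarith
  rw [ost_of_ne_zero hx'0.ne']
  dsimp only
  rw [Int.fract_eq_self.mpr ⟨div_nonneg hy'0 hx'0.le, (div_lt_one hx'0).mpr hy'x'⟩,
    one_sub_div hx'0.ne', hdiff]
  field_simp

lemma two_mul_one_sub_snd_le {p : ℝ × ℝ} (h : OstDomain p) (heq : ⌊1 / p.1⌋ = ⌊p.2 / p.1⌋) :
    2 * (1 - p.2) ≤ 1 - (ost (ost p)).2 := by
  have hhalf : p.1 * (ost p).1 ≤ 1 / 2 := by
    rw [ost_of_ne_zero h.pos.ne']
    exact mul_fract_one_div_le_half h.pos h.lt_one.le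
  have hpos : 0 < p.1 * (ost p).1 := mul_pos h.pos (ostDomain_ost h.irrational).pos
  rw [one_sub_snd_ost_ost h heq, le_div_iff₀ hpos]
  nlinarith [h.snd_lt_one]

lemma exists_floor_ne_iterate {p : ℝ × ℝ} (h : OstDomain p) :
    ∃ k : ℕ, ⌊1 / (ost^[2 * k] p).1⌋ ≠ ⌊(ost^[2 * k] p).2 / (ost^[2 * k] p).1⌋ := by
  by_contra! hall
  have hgrowth : ∀ k : ℕ, 2 ^ k * (1 - p.2) ≤ 1 - (ost^[2 * k] p).2 := by
    intro k
    induction k with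
    | zero => simp
    | succ k ih =>
      have hstep := two_mul_one_sub_snd_le (h.iterate (2 * k)) (hall k)
      rw [pow_succ, show 2 * (k + 1) = 2 * k + 1 + 1 by ring, Function.iterate_succ_apply',
        Function.iterate_succ_apply']
      linarith
  obtain ⟨k, hk⟩ := pow_unbounded_of_one_lt (1 / (1 - p.2)) one_lt_two
  rw [div_lt_iff₀ (by linarith [h.snd_lt_one])] at hk
  linarith [hgrowth k, (h.iterate (2 * k)).snd_nonneg]

lemma exists_adig_ne_bdig {x y : ℝ} (hx : Irrational x) (n : ℕ) :
    ∃ k : ℕ, adig x y (n + 1 + 2 * k) ≠ bdig x y (n + 1 + 2 * k) := by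
  obtain ⟨k, hk⟩ := exists_floor_ne_iterate (ostDomain_iterate_succ (p := (x, y)) hx n)
  refine ⟨k, ?_⟩
  rwa [adig, bdig, add_comm, Function.iterate_add_apply]

lemma infinite_setOf_odd_of_exists_add_two_mul {P : ℕ → Prop}
    (h : ∀ n, ∃ k, P (n + 1 + 2 * k)) : {i : ℕ | 1 ≤ i ∧ Odd i ∧ P (i - 1)}.Infinite := by
  refine Set.infinite_of_forall_exists_gt fun a => ?_
  obtain ⟨k, hk⟩ := h (2 * a + 1)
  refine ⟨2 * a + 2 * k + 3, ⟨by omega, ⟨a + k + 1, by ring⟩, ?_⟩, by omega⟩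
  rwa [show 2 * a + 2 * k + 3 - 1 = 2 * a + 1 + 1 + 2 * k by omega]

lemma infinite_setOf_even_of_exists_add_two_mul {P : ℕ → Prop}
    (h : ∀ n, ∃ k, P (n + 1 + 2 * k)) : {i : ℕ | 1 ≤ i ∧ Even i ∧ P (i - 1)}.Infinite := by
  refine Set.infinite_of_forall_exists_gt fun a => ?_
  obtain ⟨k, hk⟩ := h (2 * a)
  refine ⟨2 * a + 2 * k + 2, ⟨by omega, ⟨a + k + 1, by ring⟩, ?_⟩, by omega⟩
  rwa [show 2 * a + 2 * k + 2 - 1 = 2 * a + 1 + 2 * k by omega]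

theorem ostrowski_digits_infinitely_neq_general (x y : ℝ) (hirr : Irrational x) :
    {i : ℕ | 1 ≤ i ∧ Odd i ∧ adig x y (i - 1) ≠ bdig x y (i - 1)}.Infinite ∧
    {i : ℕ | 1 ≤ i ∧ Even i ∧ adig x y (i - 1) ≠ bdig x y (i - 1)}.Infinite :=
  ⟨infinite_setOf_odd_of_exists_add_two_mul (P := fun j => adig x y j ≠ bdig x y j)
      (exists_adig_ne_bdig hirr),
    infinite_setOf_even_of_exists_add_two_mul (P := fun j => adig x y j ≠ bdig x y j)
      (exists_adig_ne_bdig hirr)⟩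

/-- `a_i ≠ b_i` for infinitely many odd indices `i`
and infinitely many even indices `i`. -/
theorem ostrowski_digits_infinitely_neq (x y : ℝ) (hirr : Irrational x)
    (hx0 : 0 < x) (hx1 : x < 1) (hy0 : 0 ≤ y) (hy1 : y < 1) :
    {i : ℕ | 1 ≤ i ∧ Odd i ∧ adig x y (i - 1) ≠ bdig x y (i - 1)}.Infinite ∧
    {i : ℕ | 1 ≤ i ∧ Even i ∧ adig x y (i - 1) ≠ bdig x y (i - 1)}.Infinite :=
  ostrowski_digits_infinitely_neq_general x y hirr
end
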